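/- If G is a group, N a central subgroup of G, and G/N is a perfect group, then the commutator subgroup [G,G] is itself perfect. -/

import Mathlib

/-!
Since `G ⧸ N` is perfect, `G = [G, G] N`. Commutators do not see central factors, so every
commutator `⁅h₁ n₁, h₂ n₂⁆` of `G` equals `⁅h₁, h₂⁆` with `hᵢ ∈ [G, G]`, whence
`[G, G] ≤ [[G, G], [G, G]]`.
-/

open scoped commutatorElement

namespace Subgroup

variable {G : Type*} [Group G]

theorem commutatorElement_mul_right_of_mem_center (a b : G) {z : G} (hz : z ∈ center G) :
    ⁅a, b * z⁆ = ⁅a, b⁆ := by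
  have hza : a⁻¹ * z = z * a⁻¹ := mem_center_iff.mp hz a⁻¹
  calc a * (b * z) * a⁻¹ * (b * z)⁻¹ = a * b * (z * a⁻¹ * z⁻¹) * b⁻¹ := by group
    _ = a * b * a⁻¹ * b⁻¹ := by rw [← hza, mul_inv_cancel_right]

theorem commutatorElement_mul_left_of_mem_center (a b : G) {z : G} (hz : z ∈ center G) :
    ⁅a * z, b⁆ = ⁅a, b⁆ := by
  rw [← commutatorElement_inv, commutatorElement_mul_right_of_mem_center _ _ hz,
    commutatorElement_inv]

theorem commutator_eq_commutator_of_sup_center_eq_top {H : Subgroup G}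
    (hH : H ⊔ center G = ⊤) : ⁅H, H⁆ = _root_.commutator G := by
  refine le_antisymm (commutator_mono le_top le_top) ((commutator_le).mpr ?_)
  intro g₁ _ g₂ _
  obtain ⟨h₁, hh₁, z₁, hz₁, rfl⟩ := mem_sup_of_normal_right.mp (hH ▸ mem_top g₁)
  obtain ⟨h₂, hh₂, z₂, hz₂, rfl⟩ := mem_sup_of_normal_right.mp (hH ▸ mem_top g₂)
  rw [commutatorElement_mul_left_of_mem_center _ _ hz₁,
    commutatorElement_mul_right_of_mem_center _ _ hz₂]
  exact commutator_mem_commutator hh₁ hh₂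

theorem commutator_sup_ker_eq_top {Q : Type*} [Group Q] {f : G →* Q}
    (hf : Function.Surjective f) (hQ : _root_.commutator Q = ⊤) :
    _root_.commutator G ⊔ f.ker = ⊤ := by
  rw [← comap_map_eq, map_commutator_eq, MonoidHom.range_eq_top.mpr hf,
    ← _root_.commutator_def, hQ, comap_top]

end Subgroup

theorem perfect_central_quotient_commutator_perfect
    {G : Type*} [Group G] (N : Subgroup G) [N.Normal]
    (hN : N ≤ Subgroup.center G)
    (hperf : commutator (G ⧸ N) = ⊤) :
    ⁅commutator G, commutator G⁆ = commutator G := by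
  have hsup : commutator G ⊔ N = ⊤ := by
    simpa using Subgroup.commutator_sup_ker_eq_top (QuotientGroup.mk'_surjective N) hperf
  have hcenter : commutator G ⊔ Subgroup.center G = ⊤ :=
    top_le_iff.mp (hsup ▸ sup_le_sup_left hN _)
  exact Subgroup.commutator_eq_commutator_of_sup_center_eq_top hcenter
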